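/- arXiv:2405.14408 — 2 statements merged into one kernel-verified Lean document; each statement's English description precedes it below -/
import Mathlib

section
/- If A𝟙 = 0 (the anomalies sum to zero), then the ESRF square root matrix S = (I + c·(HA)ᵀR⁻¹(HA))^{-1/2} satisfies S𝟙 = 𝟙, where 𝟙 is the all-ones vector. -/
open Matrix

namespace Matrix

variable {n : Type*} [Fintype n]

theorem one_add_smul_mul_mulVec_of_mulVec_eq_zero {m α : Type*} [Fintype m] [DecidableEq n]
    [CommSemiring α]
    (c : α) (X : Matrix n m α) {B : Matrix m n α} {v : n → α} (hBv : B *ᵥ v = 0) :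
    (1 + c • (X * B)) *ᵥ v = v := by
  rw [add_mulVec, one_mulVec, smul_mulVec, ← mulVec_mulVec, hBv, mulVec_zero, smul_zero, add_zero]

theorem inv_mulVec_eq_self_of_mulVec_eq_self {α : Type*} [DecidableEq n] [CommRing α]
    {M : Matrix n n α} (hM : IsUnit M) {v : n → α} (hMv : M *ᵥ v = v) : M⁻¹ *ᵥ v = v :=
  letI := hM.invertible
  inv_mulVec_eq_vec hMv.symm

namespace PosDef

variable {R : Type*} [Ring R] [PartialOrder R] [StarRing R] [StarOrderedRing R]
  {S : Matrix n n R}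

theorem eq_zero_of_mulVec_eq_neg (hS : S.PosDef) {w : n → R} (hSw : S *ᵥ w = -w) : w = 0 := by
  by_contra hw
  have hpos := hS.dotProduct_mulVec_pos hw
  rw [hSw, dotProduct_neg, neg_pos] at hpos
  exact (dotProduct_star_self_nonneg w).not_gt hpos

/-- Otherwise `S v - v` would be an eigenvector of `S` for the eigenvalue `-1`. -/
theorem mulVec_eq_self_of_mul_self_mulVec_eq_self (hS : S.PosDef) {v : n → R}
    (hSSv : (S * S) *ᵥ v = v) : S *ᵥ v = v := by
  refine sub_eq_zero.mp (hS.eq_zero_of_mulVec_eq_neg ?_)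
  rw [mulVec_sub, mulVec_mulVec, hSSv, neg_sub]

end PosDef

end Matrix

theorem esrf_sqrt_matrix_preserves_ones_general
    (N Nz Ny : ℕ)
    (A : Matrix (Fin Nz) (Fin N) ℝ)
    (H : Matrix (Fin Ny) (Fin Nz) ℝ)
    (R : Matrix (Fin Ny) (Fin Ny) ℝ)
    (c : ℝ)
    (hA1 : A.mulVec (fun _ => 1) = 0)
    (S : Matrix (Fin N) (Fin N) ℝ) (hSpos : S.PosDef)
    (hSS : S * S =
      ((1 : Matrix (Fin N) (Fin N) ℝ) + c • ((H * A)ᵀ * R⁻¹ * (H * A)))⁻¹) :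
    S.mulVec (fun _ => 1) = fun _ => 1 := by
  have hHA : (H * A) *ᵥ (fun _ => 1) = 0 := by rw [← mulVec_mulVec, hA1, mulVec_zero]
  have hM : IsUnit ((1 : Matrix (Fin N) (Fin N) ℝ) + c • ((H * A)ᵀ * R⁻¹ * (H * A))) :=
    isUnit_nonsing_inv_iff.mp (hSS ▸ hSpos.isUnit.mul hSpos.isUnit)
  refine hSpos.mulVec_eq_self_of_mul_self_mulVec_eq_self ?_
  rw [hSS]
  exact inv_mulVec_eq_self_of_mulVec_eq_self hM
    (one_add_smul_mul_mulVec_of_mulVec_eq_zero c _ hHA)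

theorem esrf_sqrt_matrix_preserves_ones
    (N Nz Ny : ℕ)
    (A : Matrix (Fin Nz) (Fin N) ℝ)
    (H : Matrix (Fin Ny) (Fin Nz) ℝ)
    (R : Matrix (Fin Ny) (Fin Ny) ℝ) (hR : R.PosDef)
    (c : ℝ) (hc : 0 < c)
    (hA1 : A.mulVec (fun _ => 1) = 0)
    (S : Matrix (Fin N) (Fin N) ℝ) (hSpos : S.PosDef)
    (hSS : S * S =
      ((1 : Matrix (Fin N) (Fin N) ℝ) + c • ((H * A)ᵀ * R⁻¹ * (H * A)))⁻¹) :
    S.mulVec (fun _ => 1) = fun _ => 1 :=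
  esrf_sqrt_matrix_preserves_ones_general N Nz Ny A H R c hA1 S hSpos hSS
end

section
/- Let H be linear, c = 1/(N-1), B = HA, and S = (I + c·BᵀR⁻¹B)^{-1/2}. With P^f = c·AAᵀ and Kalman gain K = P^f Hᵀ(H P^f Hᵀ + R)⁻¹, the ESRF analysis covariance c·A S² Aᵀ equals (I - KH)P^f. -/
open Matrix

private lemma psd_smul {n : ℕ} {M : Matrix (Fin n) (Fin n) ℝ} (h : M.PosSemidef)
    {c : ℝ} (hc : 0 ≤ c) : (c • M).PosSemidef := by
  refine ⟨?_, fun x => ?_⟩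
  · show (c • M)ᴴ = c • M
    rw [conjTranspose_smul, h.1.eq]
    simp
  · have h2 := mul_nonneg hc (h.2 x)
    simp only [Finsupp.mul_sum] at h2
    simp only [Matrix.smul_apply, smul_eq_mul]
    convert h2 using 1
    congr 1; ext i xi; congr 1; ext j xj; ring

theorem esrf_analysis_covariance_identity
    (N Nz Ny : ℕ) (hN : 2 ≤ N)
    (A : Matrix (Fin Nz) (Fin N) ℝ)
    (H : Matrix (Fin Ny) (Fin Nz) ℝ)
    (R : Matrix (Fin Ny) (Fin Ny) ℝ) (hR : R.PosDef)
    (c : ℝ) (hc : c = 1 / ((N : ℝ) - 1))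
    (B : Matrix (Fin Ny) (Fin N) ℝ) (hB : B = H * A)
    (Pf : Matrix (Fin Nz) (Fin Nz) ℝ) (hPf : Pf = c • (A * Aᵀ))
    (S2 : Matrix (Fin N) (Fin N) ℝ)
    (hS2 : S2 = ((1 : Matrix (Fin N) (Fin N) ℝ) + c • (Bᵀ * R⁻¹ * B))⁻¹)
    (K : Matrix (Fin Nz) (Fin Ny) ℝ)
    (hK : K = Pf * Hᵀ * (H * Pf * Hᵀ + R)⁻¹) :
    c • (A * S2 * Aᵀ) = Pf - K * H * Pf := by
  have hN1 : (1 : ℝ) ≤ (N : ℝ) - 1 := by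
    have : (2 : ℝ) ≤ (N : ℝ) := by exact_mod_cast hN
    linarith
  have hc0 : 0 < c := by rw [hc]; positivity
  set T : Matrix (Fin Ny) (Fin Ny) ℝ := c • (B * Bᵀ) + R with hT
  have hBBt : (B * Bᵀ).PosSemidef := by
    have := Matrix.posSemidef_self_mul_conjTranspose B
    rwa [conjTranspose_eq_transpose_of_trivial] at this
  have hTpd : T.PosDef := Matrix.PosDef.posSemidef_add (psd_smul hBBt hc0.le) hR
  have hTdet : IsUnit T.det := isUnit_iff_ne_zero.mpr hTpd.det_pos.ne'
  have hRdet : IsUnit R.det := isUnit_iff_ne_zero.mpr hR.det_pos.ne'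
  have hTT : T * T⁻¹ = 1 := Matrix.mul_nonsing_inv T hTdet
  have hRR : R⁻¹ * R = 1 := Matrix.nonsing_inv_mul R hRdet
  have h1 : Bᵀ * (R⁻¹ * T) * (T⁻¹ * B) = Bᵀ * R⁻¹ * B := by
    simp only [Matrix.mul_assoc]
    rw [← Matrix.mul_assoc T, hTT, Matrix.one_mul]
  have h2 : R⁻¹ * T = c • (R⁻¹ * (B * Bᵀ)) + 1 := by
    rw [hT, mul_add, hRR, Matrix.mul_smul]
  have key : Bᵀ * R⁻¹ * B =
      c • (Bᵀ * R⁻¹ * B * (Bᵀ * T⁻¹ * B)) + Bᵀ * T⁻¹ * B := by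
    calc Bᵀ * R⁻¹ * B = Bᵀ * (R⁻¹ * T) * (T⁻¹ * B) := h1.symm
      _ = Bᵀ * (c • (R⁻¹ * (B * Bᵀ)) + 1) * (T⁻¹ * B) := by rw [h2]
      _ = c • (Bᵀ * R⁻¹ * B * (Bᵀ * T⁻¹ * B)) + Bᵀ * T⁻¹ * B := by
          simp only [Matrix.mul_add, Matrix.add_mul, Matrix.mul_one,
            Matrix.mul_smul, Matrix.smul_mul, Matrix.mul_assoc]
  have hW : ((1 : Matrix (Fin N) (Fin N) ℝ) + c • (Bᵀ * R⁻¹ * B)) *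
      ((1 : Matrix (Fin N) (Fin N) ℝ) - c • (Bᵀ * T⁻¹ * B)) = 1 := by
    simp only [Matrix.add_mul, Matrix.mul_sub, Matrix.one_mul, Matrix.mul_one,
      Matrix.smul_mul, Matrix.mul_smul, smul_add, smul_smul]
    have key2 : c • (Bᵀ * R⁻¹ * B) =
        (c * c) • (Bᵀ * R⁻¹ * B * (Bᵀ * T⁻¹ * B)) + c • (Bᵀ * T⁻¹ * B) := by
      conv_lhs => rw [key]
      rw [smul_add, smul_smul]
    rw [key2]
    abel
  have hS2' : S2 = (1 : Matrix (Fin N) (Fin N) ℝ) - c • (Bᵀ * T⁻¹ * B) := by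
    rw [hS2]; exact Matrix.inv_eq_right_inv hW
  have hHT : H * Pf * Hᵀ + R = T := by
    rw [hPf, hT, hB, transpose_mul]
    congr 1
    simp only [Matrix.mul_smul, Matrix.smul_mul, Matrix.mul_assoc]
  have hRHS : K * H * Pf = (c * c) • (A * (Bᵀ * T⁻¹ * B) * Aᵀ) := by
    rw [hK, hHT, hPf, hB]
    simp only [transpose_mul, Matrix.smul_mul, Matrix.mul_smul, smul_smul, Matrix.mul_assoc]
  rw [hS2', hRHS, hPf]
  simp only [Matrix.mul_sub, Matrix.sub_mul, Matrix.mul_one, Matrix.one_mul,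
    Matrix.mul_smul, Matrix.smul_mul, smul_sub, smul_smul, Matrix.mul_assoc]
end
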